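/- arXiv:1410.7030 — 3 statements merged into one kernel-verified Lean document; each statement's English description precedes it below -/
import Mathlib

section
/- Let s be a positive integer and let G be a finite connected simple graph that contains a path on 5 vertices as a subgraph and has exactly 2s vertices of odd degree. Then G has at least s + 3 edges. -/
/-- A finite connected simple graph containing a path on 5 vertices as a
subgraph and having exactly 2s vertices of odd degree (s ≥ 1) has at least
s + 3 edges. -/
theorem edges_lower_bound_of_P5_subgraph
    {V : Type} [Finite V] (G : SimpleGraph V) (s : ℕ) (hs : 0 < s)
    (hconn : G.Connected)
    (hP5 : ∃ v₁ v₂ v₃ v₄ v₅ : V, [v₁, v₂, v₃, v₄, v₅].Nodup ∧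
      G.Adj v₁ v₂ ∧ G.Adj v₂ v₃ ∧ G.Adj v₃ v₄ ∧ G.Adj v₄ v₅)
    (hodd : {v : V | Odd ((G.neighborSet v).ncard)}.ncard = 2 * s) :
    s + 3 ≤ G.edgeSet.ncard := by
  classical
  have : Fintype V := Fintype.ofFinite V
  obtain ⟨v₁, v₂, v₃, v₄, v₅, hnd, h12, h23, h34, h45⟩ := hP5
  simp only [List.nodup_cons, List.mem_cons, List.mem_singleton, List.not_mem_nil,
    List.nodup_nil, and_true, not_or, List.mem_nil_iff, or_false] at hnd
  obtain ⟨⟨h12d, h13, h14, h15⟩, ⟨h23d, h24, h25⟩, ⟨h34d, h35⟩, h45d⟩ := hnd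
  -- ncard of neighborSet is degree
  have hncard : ∀ v, (G.neighborSet v).ncard = G.degree v := by
    intro v
    rw [← SimpleGraph.card_neighborSet_eq_degree, Set.ncard_eq_toFinset_card',
      Set.toFinset_card]
  set Od : Finset V := Finset.univ.filter (fun v => Odd (G.degree v)) with hOdDef
  have hOd : Od.card = 2 * s := by
    have hset : {v : V | Odd ((G.neighborSet v).ncard)} = ↑Od := by
      ext v; simp [hOdDef, hncard v]
    rw [hset, Set.ncard_coe_finset] at hodd
    exact hodd
  -- every vertex has positive degree
  have hpos : ∀ v : V, 0 < G.degree v := by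
    intro v
    rw [G.degree_pos_iff_exists_adj]
    have hne : ∃ u : V, u ≠ v := by
      rcases eq_or_ne v v₁ with rfl | h
      · exact ⟨v₂, fun h => h12d h.symm⟩
      · exact ⟨v₁, fun h' => h (h'.symm)⟩
    obtain ⟨u, hu⟩ := hne
    obtain ⟨w⟩ := hconn.preconnected v u
    cases w with
    | nil => exact absurd rfl hu.symm
    | cons h _ => exact ⟨_, h⟩
  -- two distinct neighbors give degree ≥ 2
  have two_le : ∀ v a b : V, a ≠ b → G.Adj v a → G.Adj v b → 2 ≤ G.degree v := by
    intro v a b hab ha hb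
    have hsub : ({a, b} : Finset V) ⊆ G.neighborFinset v := by
      intro x hx
      simp only [Finset.mem_insert, Finset.mem_singleton] at hx
      rcases hx with rfl | rfl <;> simp [SimpleGraph.mem_neighborFinset, ha, hb]
    have h2 : ({a, b} : Finset V).card = 2 := by
      rw [Finset.card_insert_of_notMem (by simpa using hab), Finset.card_singleton]
    calc 2 = ({a, b} : Finset V).card := h2.symm
      _ ≤ (G.neighborFinset v).card := Finset.card_le_card hsub
      _ = G.degree v := rfl
  set M : Finset V := {v₂, v₃, v₄} with hMdef
  have hMcard : M.card = 3 := by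
    rw [hMdef, Finset.card_insert_of_notMem (by simp [h23d, h24]),
      Finset.card_insert_of_notMem (by simp [h34d]), Finset.card_singleton]
  have hMdeg2 : ∀ v ∈ M, 2 ≤ G.degree v := by
    intro v hv
    rw [hMdef] at hv
    simp only [Finset.mem_insert, Finset.mem_singleton] at hv
    rcases hv with rfl | rfl | rfl
    · exact two_le _ v₁ v₃ h13 h12.symm h23
    · exact two_le _ v₂ v₄ h24 h23.symm h34
    · exact two_le _ v₃ v₅ h35 h34.symm h45
  -- lower bounds on degrees
  have hOdddeg : ∀ v ∈ Od \ M, 1 ≤ G.degree v := fun v _ => hpos v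
  have hMidOdd : ∀ v ∈ Od ∩ M, 3 ≤ G.degree v := by
    intro v hv
    rw [Finset.mem_inter] at hv
    have h2 := hMdeg2 v hv.2
    have hodd' : Odd (G.degree v) := by
      have := hv.1; rw [hOdDef, Finset.mem_filter] at this; exact this.2
    obtain ⟨c, hc⟩ := hodd'
    omega
  have hEven : ∀ v ∈ Odᶜ, 2 ≤ G.degree v := by
    intro v hv
    rw [Finset.mem_compl, hOdDef, Finset.mem_filter] at hv
    have heven : ¬ Odd (G.degree v) := fun h => hv ⟨Finset.mem_univ v, h⟩
    rw [Nat.not_odd_iff_even] at heven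
    have h0 := hpos v
    obtain ⟨c, hc⟩ := heven
    omega
  -- sums
  have hsum : ∑ v : V, G.degree v = 2 * G.edgeFinset.card :=
    G.sum_degrees_eq_twice_card_edges
  have hsplit1 : ∑ v ∈ Od, G.degree v + ∑ v ∈ Odᶜ, G.degree v = ∑ v : V, G.degree v :=
    Finset.sum_add_sum_compl Od _
  have hsplit2 : ∑ v ∈ Od ∩ M, G.degree v + ∑ v ∈ Od \ M, G.degree v
      = ∑ v ∈ Od, G.degree v := Finset.sum_inter_add_sum_sdiff Od M _
  have hb1 : (Od ∩ M).card * 3 ≤ ∑ v ∈ Od ∩ M, G.degree v := by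
    calc (Od ∩ M).card * 3 = ∑ _v ∈ Od ∩ M, 3 := by rw [Finset.sum_const, smul_eq_mul]
      _ ≤ ∑ v ∈ Od ∩ M, G.degree v := Finset.sum_le_sum hMidOdd
  have hb2 : (Od \ M).card * 1 ≤ ∑ v ∈ Od \ M, G.degree v := by
    calc (Od \ M).card * 1 = ∑ _v ∈ Od \ M, 1 := by rw [Finset.sum_const, smul_eq_mul]
      _ ≤ ∑ v ∈ Od \ M, G.degree v := Finset.sum_le_sum hOdddeg
  have hb3 : Odᶜ.card * 2 ≤ ∑ v ∈ Odᶜ, G.degree v := by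
    calc Odᶜ.card * 2 = ∑ _v ∈ Odᶜ, 2 := by rw [Finset.sum_const, smul_eq_mul]
      _ ≤ ∑ v ∈ Odᶜ, G.degree v := Finset.sum_le_sum hEven
  -- cardinalities
  have hc1 : (Od ∩ M).card + (Od \ M).card = Od.card :=
    Finset.card_inter_add_card_sdiff Od M
  have hc2 : (M ∩ Od).card + (M \ Od).card = M.card :=
    Finset.card_inter_add_card_sdiff M Od
  have hc3 : (M ∩ Od).card = (Od ∩ M).card := by rw [Finset.inter_comm]
  have hc4 : (M \ Od).card ≤ Odᶜ.card := by
    apply Finset.card_le_card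
    intro x hx
    rw [Finset.mem_sdiff] at hx
    rw [Finset.mem_compl]
    exact hx.2
  -- edge count
  have hedge : G.edgeSet.ncard = G.edgeFinset.card := by
    rw [Set.ncard_eq_toFinset_card', SimpleGraph.edgeFinset]
  rw [hedge]
  linarith
end

section
/- Let G be a finite simple graph with exactly 7 edges, exactly 12 vertices of odd degree, and no isolated vertices. Then every connected component of G contains either exactly 2 or exactly 4 vertices of odd degree. -/
/-!
Let `c` be a component containing `k` of the `12` odd vertices. The other `12 - k` odd vertices
have degree at least `1`, so the degrees inside `c` sum to at most `14 - (12 - k) = 2 + k`. That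
sum is twice the number of edges of `c`, which is at least `|c| - 1 ≥ k - 1` because `c` is
connected; hence `k ≤ 4`. If `k = 0`, every vertex of `c` has even nonzero degree, so `c` has at
least two vertices of degree at least `2` and its degrees sum to at least `4 > 2`. Finally `k` is
even by the handshake lemma applied to `c`.
-/

open Finset

theorem Finset.card_filter_odd_le_sum {ι : Type*} (s : Finset ι) (f : ι → ℕ) :
    #{i ∈ s | Odd (f i)} ≤ ∑ i ∈ s, f i := by
  rw [card_filter]
  exact sum_le_sum fun i _ => by split_ifs with h; exacts [h.pos, Nat.zero_le _]

namespace SimpleGraph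

variable {V : Type*} {G : SimpleGraph V}

theorem ncard_neighborSet_eq_degree (v : V) [Fintype (G.neighborSet v)] :
    (G.neighborSet v).ncard = G.degree v :=
  Set.ncard_eq_toFinset_card' _

theorem ncard_edgeSet [Fintype G.edgeSet] : G.edgeSet.ncard = #G.edgeFinset :=
  Set.ncard_eq_toFinset_card' _

variable [Fintype V] [DecidableEq V] [DecidableRel G.Adj]

theorem sum_degree_add_card_odd_degree_le (s : Finset V) :
    ∑ v ∈ s, G.degree v + #{v | Odd (G.degree v)} ≤
      2 * #G.edgeFinset + #{v ∈ s | Odd (G.degree v)} := by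
  have hsplit : #{v ∈ s | Odd (G.degree v)} + #{v ∈ sᶜ | Odd (G.degree v)} =
      #{v | Odd (G.degree v)} := by
    rw [← card_union_of_disjoint (disjoint_filter_filter disjoint_compl_right), ← filter_union,
      union_compl]
  have hcompl := card_filter_odd_le_sum sᶜ fun v => G.degree v
  have htotal := G.sum_degrees_eq_twice_card_edges
  rw [← sum_add_sum_compl s] at htotal
  omega

namespace ConnectedComponent

variable (c : G.ConnectedComponent)

theorem degree_induce_supp (v : c.supp) : (G.induce c.supp).degree v = G.degree v :=
  degree_induce_of_neighborSet_subset fun _ hw => c.mem_supp_of_adj_mem_supp v.2 hw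

theorem sum_degree_supp :
    ∑ v ∈ c.supp.toFinset, G.degree v = 2 * #(G.induce c.supp).edgeFinset := by
  rw [← sum_degrees_eq_twice_card_edges, ← sum_set_coe]
  simp only [degree_induce_supp]

theorem card_supp_le : #c.supp.toFinset ≤ #(G.induce c.supp).edgeFinset + 1 := by
  have : Nat.card c.supp ≤ Nat.card (G.induce c.supp).edgeSet + 1 :=
    c.connected_toSimpleGraph.card_vert_le_card_edgeSet_add_one
  rwa [Nat.card_eq_card_toFinset, Nat.card_eq_fintype_card, ← edgeFinset_card] at this

theorem even_card_odd_degree_supp : Even #{v ∈ c.supp.toFinset | Odd (G.degree v)} := by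
  rw [← even_sum_iff_even_card_odd, sum_degree_supp]
  exact even_two_mul _

theorem card_odd_degree_supp_add_card_odd_degree_le :
    #{v ∈ c.supp.toFinset | Odd (G.degree v)} + #{v | Odd (G.degree v)} ≤
      2 * #G.edgeFinset + 2 := by
  have hsum := G.sum_degree_add_card_odd_degree_le c.supp.toFinset
  have hedges := c.sum_degree_supp
  have htree := c.card_supp_le
  have hodd := card_filter_le c.supp.toFinset fun v => Odd (G.degree v)
  omega

theorem four_add_card_odd_degree_le (hiso : ∀ v ∈ c.supp, G.degree v ≠ 0)
    (hnone : #{v ∈ c.supp.toFinset | Odd (G.degree v)} = 0) :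
    4 + #{v | Odd (G.degree v)} ≤ 2 * #G.edgeFinset := by
  obtain ⟨v, hv⟩ := c.nonempty_supp
  obtain ⟨w, hvw⟩ := (G.degree_pos_iff_exists_adj v).mp (Nat.pos_of_ne_zero (hiso v hv))
  have htwo : 1 < #c.supp.toFinset := one_lt_card.mpr
    ⟨v, Set.mem_toFinset.mpr hv, w, Set.mem_toFinset.mpr (c.mem_supp_of_adj_mem_supp hv hvw),
      hvw.ne⟩
  have hdeg : ∀ u ∈ c.supp.toFinset, 2 ≤ G.degree u := fun u hu => by
    obtain ⟨m, hm⟩ := Nat.not_odd_iff_even.mp (filter_eq_empty_iff.mp (card_eq_zero.mp hnone) hu)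
    have := hiso u (Set.mem_toFinset.mp hu)
    omega
  have hsum_ge := card_nsmul_le_sum _ _ _ hdeg
  have hsum := G.sum_degree_add_card_odd_degree_le c.supp.toFinset
  rw [smul_eq_mul] at hsum_ge
  omega

end ConnectedComponent

end SimpleGraph

/-- In a finite simple graph with exactly 7 edges, exactly 12 vertices of odd
degree, and no isolated vertices, every connected component contains either
exactly 2 or exactly 4 vertices of odd degree. -/
theorem component_odd_vertices_two_or_four
    {V : Type} [Finite V] (G : SimpleGraph V)
    (hedges : G.edgeSet.ncard = 7)
    (hodd : {v : V | Odd ((G.neighborSet v).ncard)}.ncard = 12)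
    (hiso : ∀ v : V, (G.neighborSet v).ncard ≠ 0) :
    ∀ c : G.ConnectedComponent,
      {v : V | G.connectedComponentMk v = c ∧ Odd ((G.neighborSet v).ncard)}.ncard = 2 ∨
      {v : V | G.connectedComponentMk v = c ∧ Odd ((G.neighborSet v).ncard)}.ncard = 4 := by
  classical
  have := Fintype.ofFinite V
  intro c
  simp only [SimpleGraph.ncard_neighborSet_eq_degree] at hodd hiso ⊢
  rw [SimpleGraph.ncard_edgeSet] at hedges
  rw [Set.ncard_eq_toFinset_card', Set.toFinset_ofPred] at hodd
  have hset : {v | G.connectedComponentMk v = c ∧ Odd (G.degree v)} =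
      ↑({v ∈ c.supp.toFinset | Odd (G.degree v)} : Finset V) := by
    ext; simp [SimpleGraph.ConnectedComponent.mem_supp_iff]
  rw [hset, Set.ncard_coe_finset]
  have hle := c.card_odd_degree_supp_add_card_odd_degree_le
  have hne : #{v ∈ c.supp.toFinset | Odd (G.degree v)} ≠ 0 := fun h0 => by
    have := c.four_add_card_odd_degree_le (fun v _ => hiso v) h0
    omega
  obtain ⟨j, hj⟩ := c.even_card_odd_degree_supp
  omega
end

section
/- Let G be a finite simple graph with exactly 7 edges, exactly 12 vertices of odd degree, and no isolated vertices. Then every connected component of G is isomorphic to the path P_2 on 2 vertices, the path P_3 on 3 vertices, or the star K_{1,3}. -/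
/-!
The degrees are all positive and sum to `14`, and there are at least `12` vertices, so the excess
`∑ (deg v - 1) = 14 - |V|` is at most `2`. So every degree is at most `3`, and two vertices of degree
`≥ 2` would force exactly `12` vertices, all of odd degree `≥ 3`, exceeding the degree sum. Hence a
component either consists of leaves only, and is an edge, or has a single vertex of degree `2` or
`3` all of whose neighbours are leaves, and is `P₃` or `K_{1,3}`.
-/

open Finset

namespace SimpleGraph

def pathGraphTwoIsoCompleteBipartiteGraph :
    pathGraph 2 ≃g completeBipartiteGraph (Fin 1) (Fin 1) where
  toFun i := if i = 0 then .inl 0 else .inr 0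
  invFun := Sum.elim (fun _ ↦ 0) (fun _ ↦ 1)
  left_inv := by decide
  right_inv := by decide
  map_rel_iff' {a b} := by fin_cases a <;> fin_cases b <;> simp [pathGraph_adj]

def pathGraphThreeIsoCompleteBipartiteGraph :
    pathGraph 3 ≃g completeBipartiteGraph (Fin 1) (Fin 2) where
  toFun i := if i = 1 then .inl 0 else if i = 0 then .inr 0 else .inr 1
  invFun := Sum.elim (fun _ ↦ 1) (fun j ↦ if j = 0 then 0 else 2)
  left_inv := by decide
  right_inv := by decide
  map_rel_iff' {a b} := by fin_cases a <;> fin_cases b <;> simp [pathGraph_adj]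

variable {V : Type*} {G : SimpleGraph V}

theorem connectedComponentMk_supp_subset_of_adj_closed {s : Set V} {x : V} (hx : x ∈ s)
    (hs : ∀ ⦃u v⦄, u ∈ s → G.Adj u v → v ∈ s) : (G.connectedComponentMk x).supp ⊆ s := by
  intro v hv
  have hxv : Relation.ReflTransGen G.Adj x v :=
    (reachable_iff_reflTransGen _ _).mp (ConnectedComponent.exact hv).symm
  clear hv
  induction hxv with
  | refl => exact hx
  | tail _ huv ih => exact hs ih huv

section Star

variable {x : V} (hleaf : ∀ ⦃y z⦄, G.Adj x y → G.Adj y z → z = x)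
include hleaf

theorem supp_connectedComponentMk_eq_insert_neighborSet :
    (G.connectedComponentMk x).supp = insert x (G.neighborSet x) := by
  refine (connectedComponentMk_supp_subset_of_adj_closed (Set.mem_insert _ _) ?_).antisymm ?_
  · rintro u v (rfl | hu) huv
    · exact Set.mem_insert_of_mem _ huv
    · exact hleaf hu huv ▸ Set.mem_insert _ _
  · rintro v (rfl | hv)
    · exact ConnectedComponent.connectedComponentMk_mem
    · exact (ConnectedComponent.mem_supp_congr_adj _ hv).mp
        ConnectedComponent.connectedComponentMk_mem

def induceInsertNeighborSetIso [DecidableEq V] :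
    G.induce (insert x (G.neighborSet x)) ≃g
      completeBipartiteGraph (Fin 1) (G.neighborSet x) where
  toFun v := if h : v.1 = x then .inl 0 else .inr ⟨v.1, v.2.resolve_left h⟩
  invFun := Sum.elim (fun _ ↦ ⟨x, Set.mem_insert _ _⟩)
    (fun y ↦ ⟨y, Set.mem_insert_of_mem _ y.2⟩)
  left_inv := by
    rintro ⟨v, rfl | hv⟩
    · simp
    · simp [(G.ne_of_adj hv).symm]
  right_inv := by
    rintro (i | ⟨y, hy⟩)
    · simp [Fin.fin_one_eq_zero i]
    · simp [(G.ne_of_adj hy).symm]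
  map_rel_iff' := by
    rintro ⟨a, rfl | ha⟩ ⟨b, rfl | hb⟩
    · simp
    · simpa [(G.ne_of_adj hb).symm] using hb
    · simpa [(G.ne_of_adj ha).symm] using ha.symm
    · have hab : ¬G.Adj a b := fun h ↦ G.ne_of_adj hb (hleaf ha h).symm
      simp [(G.ne_of_adj ha).symm, (G.ne_of_adj hb).symm, hab]

end Star

section Degrees

variable [Fintype V] (G) [DecidableRel G.Adj]

theorem eq_of_adj_of_adj_of_degree_eq_one {x y z : V} (hy : G.degree y = 1) (hx : G.Adj y x)
    (hz : G.Adj y z) : z = x :=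
  (degree_eq_one_iff_existsUnique_adj.mp hy).unique hz hx

theorem exists_rep_with_leaf_neighbors (hmin : ∀ v, G.degree v ≠ 0)
    (hhub : {v | 2 ≤ G.degree v}.Subsingleton) (c : G.ConnectedComponent) :
    ∃ x, G.connectedComponentMk x = c ∧ ∀ ⦃y z⦄, G.Adj x y → G.Adj y z → z = x := by
  suffices ∃ x, G.connectedComponentMk x = c ∧ ∀ y, G.Adj x y → G.degree y = 1 by
    obtain ⟨x, hxc, hx⟩ := this
    exact ⟨x, hxc, fun y z hxy hyz ↦ G.eq_of_adj_of_adj_of_degree_eq_one (hx y hxy) hxy.symm hyz⟩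
  by_cases h : ∃ x, G.connectedComponentMk x = c ∧ 2 ≤ G.degree x
  · obtain ⟨x, hxc, hx⟩ := h
    refine ⟨x, hxc, fun y hxy ↦ ?_⟩
    have : ¬2 ≤ G.degree y := fun hy ↦ G.ne_of_adj hxy (hhub hx hy)
    have := hmin y
    omega
  · obtain ⟨x, hxc⟩ := c.exists_rep
    refine ⟨x, hxc, fun y hxy ↦ ?_⟩
    have : ¬2 ≤ G.degree y := fun hy ↦
      h ⟨y, (ConnectedComponent.connectedComponentMk_eq_of_adj hxy).symm.trans hxc, hy⟩
    have := hmin y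
    omega

theorem card_compl_add_sum_degree_le [DecidableEq V] (hmin : ∀ v, G.degree v ≠ 0)
    (s : Finset V) : #sᶜ + ∑ v ∈ s, G.degree v ≤ 2 * #G.edgeFinset := by
  rw [← G.sum_degrees_eq_twice_card_edges, ← sum_compl_add_sum s, card_eq_sum_ones]
  gcongr with v
  exact Nat.one_le_iff_ne_zero.mpr (hmin v)

variable (hmin : ∀ v, G.degree v ≠ 0) (hedges : #G.edgeFinset = 7)
  (hodd : 12 ≤ #{v | Odd (G.degree v)})
include hmin hedges hodd

theorem degree_le_three (v : V) : G.degree v ≤ 3 := by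
  classical
  have hcard : 12 ≤ Fintype.card V := hodd.trans (card_le_univ _)
  have := G.card_compl_add_sum_degree_le hmin {v}
  rw [card_compl, card_singleton, sum_singleton] at this
  omega

theorem subsingleton_setOf_two_le_degree : {v | 2 ≤ G.degree v}.Subsingleton := by
  classical
  intro v (hv : 2 ≤ G.degree v) w (hw : 2 ≤ G.degree w)
  by_contra hvw
  have hcard : 12 ≤ Fintype.card V := hodd.trans (card_le_univ _)
  have hsum := G.card_compl_add_sum_degree_le hmin {v, w}
  rw [card_compl, card_pair hvw, sum_pair hvw] at hsum
  -- the vertex count is squeezed to `12`, so every degree is odd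
  have hall : ∀ u, Odd (G.degree u) := by
    have := card_le_univ {v | Odd (G.degree v)}
    simpa [filter_eq_self] using eq_univ_of_card {v | Odd (G.degree v)} (by omega)
  have hov := Nat.odd_iff.mp (hall v)
  have how := Nat.odd_iff.mp (hall w)
  omega

end Degrees

end SimpleGraph

open SimpleGraph

/-- In a finite simple graph with exactly 7 edges, exactly 12 vertices of odd
degree, and no isolated vertices, every connected component is isomorphic to
the path P₂ (on 2 vertices), the path P₃ (on 3 vertices), or the star K_{1,3}. -/
theorem component_is_P2_P3_or_K13
    {V : Type} [Finite V] (G : SimpleGraph V)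
    (hedges : G.edgeSet.ncard = 7)
    (hodd : {v : V | Odd ((G.neighborSet v).ncard)}.ncard = 12)
    (hiso : ∀ v : V, (G.neighborSet v).ncard ≠ 0) :
    ∀ c : G.ConnectedComponent,
      Nonempty (G.induce c.supp ≃g SimpleGraph.pathGraph 2) ∨
      Nonempty (G.induce c.supp ≃g SimpleGraph.pathGraph 3) ∨
      Nonempty (G.induce c.supp ≃g completeBipartiteGraph (Fin 1) (Fin 3)) := by
  classical
  have := Fintype.ofFinite V
  have hdeg (v : V) : (G.neighborSet v).ncard = G.degree v := by
    rw [Set.ncard_eq_toFinset_card', Set.toFinset_card, card_neighborSet_eq_degree]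
  simp only [hdeg] at hodd hiso
  replace hedges : #G.edgeFinset = 7 := by rwa [← Set.ncard_coe_finset, coe_edgeFinset]
  replace hodd : 12 ≤ #{v | Odd (G.degree v)} := by
    rw [← hodd, Set.ncard_eq_toFinset_card', Set.toFinset_ofPred]
  intro c
  obtain ⟨x, rfl, hleaf⟩ := G.exists_rep_with_leaf_neighbors hiso
    (G.subsingleton_setOf_two_le_degree hiso hedges hodd) c
  rw [supp_connectedComponentMk_eq_insert_neighborSet hleaf]
  have e := (induceInsertNeighborSetIso hleaf).trans <| completeBipartiteGraphCongr (.refl _)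
    (Fintype.equivFinOfCardEq (G.card_neighborSet_eq_degree x))
  have := G.degree_le_three hiso hedges hodd x
  have := hiso x
  obtain h | h | h : G.degree x = 1 ∨ G.degree x = 2 ∨ G.degree x = 3 := by omega
  all_goals rw [h] at e
  · exact .inl ⟨e.trans pathGraphTwoIsoCompleteBipartiteGraph.symm⟩
  · exact .inr <| .inl ⟨e.trans pathGraphThreeIsoCompleteBipartiteGraph.symm⟩
  · exact .inr <| .inr ⟨e⟩
end
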